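/- arXiv:1810.04977 — 2 statements merged into one kernel-verified Lean document; each statement's English description precedes it below -/
import Mathlib

section
/- Let T ∈ R_α(Q) be Schurian and let ψ be a one-parameter subgroup of Gl_α with ψ(t)∗T = t.T for all t ∈ ℂ*. Then: (1) for every M ∈ Att(T) and every g ∈ U_ψ, g∗M ∈ Att(T); (2) for g ∈ Gl_α, one has g∗T ∈ Att(T) if and only if g ∈ U_ψ; and (3) if ψ is in standard form, say ψ_q(t) = diag(t^{a_{1,q}},…,t^{a_{α_q,q}}) for each q, then for every M ∈ Att(T), every arrow a ∈ Q_1 and all indices i,j with (T_a)_{i,j} ≠ 0, one has (M_a)_{i,j} = (T_a)_{i,j}. -/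
open Filter
open scoped Topology

namespace QuivC

variable {V A : Type} [Fintype V] [Fintype A] (s t : A → V) (α : V → ℕ) (γ : A → ℤ)

/-- The representation variety `R_α(Q) = ⊕_a Mat_{α_{t(a)} × α_{s(a)}}(ℂ)`. -/
abbrev RA : Type := ∀ a : A, Matrix (Fin (α (t a))) (Fin (α (s a))) ℂ

/-- The base change group `Gl_α = ∏_q GL_{α_q}(ℂ)`. -/
abbrev GLa : Type := ∀ q : V, GL (Fin (α q)) ℂ

/-- Base change action: `(g∗M)_a = g_{t(a)} M_a g_{s(a)}^{-1}`. -/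
noncomputable def bc (g : GLa α) (M : RA s t α) : RA s t α :=
  fun a => (g (t a) : Matrix (Fin (α (t a))) (Fin (α (t a))) ℂ) * M a *
    (((g (s a))⁻¹ : GL (Fin (α (s a))) ℂ) : Matrix (Fin (α (s a))) (Fin (α (s a))) ℂ)

/-- A one-parameter subgroup of `Gl_α`, given by the data of conjugating matrices
`h_q` and integer exponents: `ψ_q(z) = h_q · diag(z^{e_{q,i}}) · h_q^{-1}`. -/
structure OneParam (α : V → ℕ) where
  h : ∀ q, GL (Fin (α q)) ℂ
  e : ∀ q, Fin (α q) → ℤ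

/-- The value `ψ_q(z)` of a one-parameter subgroup (a matrix; invertible for `z ≠ 0`). -/
noncomputable def OneParam.val {α : V → ℕ} (ψ : OneParam α) (z : ℂ) (q : V) :
    Matrix (Fin (α q)) (Fin (α q)) ℂ :=
  (ψ.h q : Matrix _ _ ℂ) * Matrix.diagonal (fun i => z ^ (ψ.e q i)) *
    (((ψ.h q)⁻¹ : GL (Fin (α q)) ℂ) : Matrix _ _ ℂ)

/-- The action of `ψ̂(z) = (ψ(z), z^n) ∈ Ĝ_α` on `R_α(Q)`:
`(ψ̂(z).M)_a = (z^n)^{-γ_a} ψ(z)_{t(a)} M_a ψ(z)_{s(a)}^{-1}`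
(for `z ≠ 0` one has `ψ(z)^{-1} = ψ(z⁻¹)`). -/
noncomputable def hatAct (ψ : OneParam α) (n : ℤ) (z : ℂ) (M : RA s t α) : RA s t α :=
  fun a => ((z ^ n) ^ (-(γ a))) • (ψ.val z (t a) * M a * ψ.val z⁻¹ (s a))

end QuivC


namespace QuivC

open Filter
open scoped Topology

variable {V A : Type} [Fintype V] [Fintype A] (s t : A → V) (α : V → ℕ) (γ : A → ℤ)

/-- `T ∈ R_α(Q)` is Schurian: every intertwining tuple of matrices is scalar. -/
def Schurian (T : RA s t α) : Prop :=
  ∀ φ : ∀ q, Matrix (Fin (α q)) (Fin (α q)) ℂ,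
    (∀ a, φ (t a) * T a = T a * φ (s a)) →
    ∃ c : ℂ, ∀ q, φ q = c • (1 : Matrix (Fin (α q)) (Fin (α q)) ℂ)

/-- The subgroup `U_ψ = {g : lim_{z→0} ψ_q(z) g_q ψ_q(z)^{-1} = μ·Id for all q,
for some μ ∈ ℂ*}`. -/
def Upsi (ψ : OneParam α) : Set (GLa α) :=
  {g | ∃ μ : ℂ, μ ≠ 0 ∧ ∀ q,
    Tendsto (fun z : ℂ => ψ.val z q * (g q : Matrix _ _ ℂ) * ψ.val z⁻¹ q)
      (𝓝[≠] 0) (𝓝 (μ • (1 : Matrix (Fin (α q)) (Fin (α q)) ℂ)))}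

/-- The action of the pair `(ψ(z), z)`:
`((ψ(z),z).M)_a = z^{-γ_a} ψ(z)_{t(a)} M_a ψ(z)_{s(a)}^{-1}`. -/
noncomputable def attAct (ψ : OneParam α) (z : ℂ) (M : RA s t α) : RA s t α :=
  fun a => (z ^ (-(γ a))) • (ψ.val z (t a) * M a * ψ.val z⁻¹ (s a))

/-- The lifted attracting set `Att(T) = {M : lim_{z→0} (ψ(z),z).M = T}`. -/
def Att (ψ : OneParam α) (T : RA s t α) : Set (RA s t α) :=
  {M | Tendsto (fun z : ℂ => attAct s t α γ ψ z M) (𝓝[≠] 0) (𝓝 T)}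

/-- `ψ(z)∗T = z.T` for all `z ∈ ℂ*`: `T` is a lift of a torus fixed point with
associated one-parameter subgroup `ψ`. -/
def FixedLift (ψ : OneParam α) (T : RA s t α) : Prop :=
  ∀ z : ℂ, z ≠ 0 → ∀ a, ψ.val z (t a) * T a * ψ.val z⁻¹ (s a) = (z ^ (γ a)) • T a

/-- `ψ` is in standard form: each `ψ_q(z)` is the diagonal matrix
`diag(z^{e_{q,i}})`. -/
def StdForm (ψ : OneParam α) : Prop :=
  ∀ (z : ℂ) (q : V), ψ.val z q = Matrix.diagonal (fun i => z ^ (ψ.e q i))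

end QuivC

/-!
Write `h_q⁻¹ g_q h_q = B_q`. Conjugation by `ψ(z)` multiplies the entry `(B_q)_{ij}` by
`z^{e_{q,i} - e_{q,j}}`, so `ψ(z) g ψ(z)⁻¹` is a Laurent polynomial in `z`. If `g∗T ∈ Att(T)`,
rescale by `z^{-m}`, `m` the lowest weight occurring in some `B_q`, and pass to the limit in
`ψ(z) g ψ(z)⁻¹ · T_a = ((ψ(z),z).(g∗T))_a · ψ(z) g ψ(z)⁻¹`: the weight-`m` part of `g` intertwines
`T`, so it is `c • 1` by the Schur property. It contains a nonzero entry of weight `m`, so `c ≠ 0`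
and that entry is diagonal, whence `m = 0` and `ψ(z) g ψ(z)⁻¹ → c • 1`. The other implications only
use continuity of matrix multiplication and inversion; in standard form the `(i, j)` entry of
`(ψ(z),z).M` is `z^d M_{ij}` with `z^d = 1` whenever `T_{ij} ≠ 0`, by `ψ(z)∗T = z.T`.
-/

theorem Filter.Tendsto.matrix_mul {X R n m p : Type*} [TopologicalSpace R] [Fintype m] [Mul R]
    [AddCommMonoid R] [ContinuousAdd R] [ContinuousMul R] {l : Filter X}
    {f : X → Matrix n m R} {g : X → Matrix m p R} {F : Matrix n m R} {G : Matrix m p R}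
    (hf : Tendsto f l (𝓝 F)) (hg : Tendsto g l (𝓝 G)) :
    Tendsto (fun x => f x * g x) l (𝓝 (F * G)) :=
  ((continuous_fst.matrix_mul continuous_snd).tendsto (F, G)).comp (hf.prodMk_nhds hg)

theorem Filter.Tendsto.matrix_inv {X K n : Type*} [Field K] [TopologicalSpace K]
    [IsTopologicalDivisionRing K] [Fintype n] [DecidableEq n] {l : Filter X}
    {f : X → Matrix n n K} {A : Matrix n n K} (hf : Tendsto f l (𝓝 A)) (hA : A.det ≠ 0) :
    Tendsto (fun x => (f x)⁻¹) l (𝓝 A⁻¹) := by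
  refine ((continuousAt_matrix_inv A ?_).tendsto).comp hf
  rw [Ring.inverse_eq_inv']
  exact continuousAt_inv₀ hA

namespace Matrix

variable {K : Type*} [Field K] {n p : Type*}

theorem diagonal_zpow_mul_mul_diagonal_inv_zpow_apply [Fintype n] [Fintype p] [DecidableEq n]
    [DecidableEq p] (e : n → ℤ) (f : p → ℤ) (B : Matrix n p K) {z : K} (hz : z ≠ 0) (i : n)
    (j : p) :
    (diagonal (fun i => z ^ e i) * B * diagonal (fun j => z⁻¹ ^ f j)) i j =
      z ^ (e i - f j) * B i j := by
  rw [mul_diagonal, diagonal_mul, _root_.inv_zpow, zpow_sub₀ hz]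
  ring

/-- The component of `B` of weight `k` for the torus action `B ↦ diag(z^e) B diag(z^f)⁻¹`. -/
def weightPart (e : n → ℤ) (f : p → ℤ) (B : Matrix n p K) (k : ℤ) : Matrix n p K :=
  of fun i j => if e i - f j = k then B i j else 0

theorem tendsto_zpow_smul_diagonal_conj [Fintype n] [Fintype p] [DecidableEq n] [DecidableEq p]
    [TopologicalSpace K] [IsTopologicalDivisionRing K]
    (e : n → ℤ) (f : p → ℤ) (B : Matrix n p K) {m : ℤ}
    (hm : ∀ i j, B i j ≠ 0 → m ≤ e i - f j) :
    Tendsto (fun z : K => z ^ (-m) • (diagonal (fun i => z ^ e i) * B *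
      diagonal (fun j => z⁻¹ ^ f j))) (𝓝[≠] 0) (𝓝 (weightPart e f B m)) := by
  refine tendsto_pi_nhds.2 fun i => tendsto_pi_nhds.2 fun j => ?_
  have hentry : (fun z : K => (z ^ (-m) • (diagonal (fun i => z ^ e i) * B *
      diagonal (fun j => z⁻¹ ^ f j))) i j) =ᶠ[𝓝[≠] 0]
      fun z => z ^ (e i - f j - m) * B i j := by
    filter_upwards [self_mem_nhdsWithin] with z hz
    rw [Matrix.smul_apply, diagonal_zpow_mul_mul_diagonal_inv_zpow_apply e f B hz, smul_eq_mul,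
      ← mul_assoc, ← zpow_add₀ hz, neg_add_eq_sub, sub_sub]
  refine Tendsto.congr' hentry.symm ?_
  by_cases hB : B i j = 0
  · simpa [weightPart, hB] using tendsto_const_nhds
  · have hcont : Tendsto (fun z : K => z ^ (e i - f j - m)) (𝓝[≠] 0)
        (𝓝 (0 ^ (e i - f j - m))) :=
      (continuousAt_zpow₀ _ _ (Or.inr (sub_nonneg.2 (hm i j hB)))).tendsto.mono_left
        nhdsWithin_le_nhds
    convert hcont.mul_const (B i j) using 2
    simp [weightPart, _root_.zero_zpow_eq, sub_eq_zero]

theorem eq_zero_and_ne_zero_of_weightPart_eq_smul_one [DecidableEq n] {e : n → ℤ}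
    {B : Matrix n n K} {m : ℤ} {c : K} (h : weightPart e e B m = c • 1) {i j : n}
    (hij : e i - e j = m) (hB : B i j ≠ 0) :
    m = 0 ∧ c ≠ 0 := by
  have hentry : (c • (1 : Matrix n n K)) i j ≠ 0 := by
    rwa [← h, weightPart, of_apply, if_pos hij]
  obtain rfl : i = j := by
    by_contra hne
    simp [hne] at hentry
  exact ⟨by simpa using hij.symm, by rintro rfl; simp at hentry⟩

theorem eq_smul_one_of_units_conj_eq_smul_one [Fintype n] [DecidableEq n] {u : GL n K}
    {X : Matrix n n K} {c : K} (h : u.val * X * (u⁻¹).val = c • 1) : X = c • 1 := by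
  have hcomm : (c • 1 : Matrix n n K) * u.val = u.val * (c • 1) := by simp
  rwa [← Units.mul_right_inj u, ← hcomm, ← Units.mul_inv_eq_iff_eq_mul]

end Matrix

namespace QuivC

open Matrix

namespace OneParam

variable {V : Type} {α : V → ℕ} (ψ : OneParam α) {z : ℂ}

theorem val_inv_mul_val (hz : z ≠ 0) (q : V) : ψ.val z⁻¹ q * ψ.val z q = 1 := by
  simp [OneParam.val, Matrix.mul_assoc, ← Matrix.mul_assoc (diagonal _), zpow_ne_zero _ hz]

theorem val_mul_val_inv (hz : z ≠ 0) (q : V) : ψ.val z q * ψ.val z⁻¹ q = 1 := by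
  simpa using ψ.val_inv_mul_val (inv_ne_zero hz) q

theorem conj_mul_conj (hz : z ≠ 0) {p q r : V} (X : Matrix (Fin (α p)) (Fin (α q)) ℂ)
    (Y : Matrix (Fin (α q)) (Fin (α r)) ℂ) :
    ψ.val z p * X * ψ.val z⁻¹ q * (ψ.val z q * Y * ψ.val z⁻¹ r) =
      ψ.val z p * (X * Y) * ψ.val z⁻¹ r := by
  simp only [Matrix.mul_assoc]
  rw [← Matrix.mul_assoc (ψ.val z⁻¹ q), ψ.val_inv_mul_val hz, Matrix.one_mul]

theorem conj_eq_diagonal_conj (q : V) (X : Matrix (Fin (α q)) (Fin (α q)) ℂ) :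
    ψ.val z q * X * ψ.val z⁻¹ q =
      (ψ.h q).val * (diagonal (fun i => z ^ ψ.e q i) * (((ψ.h q)⁻¹).val * X * (ψ.h q).val) *
        diagonal (fun j => z⁻¹ ^ ψ.e q j)) * ((ψ.h q)⁻¹).val := by
  simp [OneParam.val, Matrix.mul_assoc]

theorem tendsto_zpow_smul_conj (q : V) (X : Matrix (Fin (α q)) (Fin (α q)) ℂ) {m : ℤ}
    (hm : ∀ i j, (((ψ.h q)⁻¹).val * X * (ψ.h q).val) i j ≠ 0 → m ≤ ψ.e q i - ψ.e q j) :
    Tendsto (fun z : ℂ => z ^ (-m) • (ψ.val z q * X * ψ.val z⁻¹ q)) (𝓝[≠] 0)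
      (𝓝 ((ψ.h q).val * weightPart (ψ.e q) (ψ.e q) (((ψ.h q)⁻¹).val * X * (ψ.h q).val) m *
        ((ψ.h q)⁻¹).val)) := by
  refine Tendsto.congr (fun z => ?_)
    (((tendsto_zpow_smul_diagonal_conj _ _ _ hm).const_mul _).mul_const _)
  rw [conj_eq_diagonal_conj, Matrix.mul_smul, Matrix.smul_mul]

theorem conj_units_inv (hz : z ≠ 0) (q : V) (g : GL (Fin (α q)) ℂ) :
    ψ.val z q * (g⁻¹).val * ψ.val z⁻¹ q = (ψ.val z q * g.val * ψ.val z⁻¹ q)⁻¹ := by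
  refine (Matrix.inv_eq_left_inv ?_).symm
  rw [ψ.conj_mul_conj hz, Units.inv_mul, Matrix.mul_one, ψ.val_mul_val_inv hz]

end OneParam

section Quiver

variable {V A : Type} {s t : A → V} {α : V → ℕ} {γ : A → ℤ}
  {ψ : OneParam α} {T : RA s t α} {z : ℂ}

theorem attAct_eq_self (hfix : FixedLift s t α γ ψ T) (hz : z ≠ 0) :
    attAct s t α γ ψ z T = T := by
  funext a
  rw [attAct, hfix z hz a, smul_smul, ← zpow_add₀ hz, neg_add_cancel, zpow_zero, one_smul]

theorem mem_att_self (hfix : FixedLift s t α γ ψ T) : T ∈ Att s t α γ ψ T :=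
  tendsto_const_nhds.congr' <| eventually_nhdsWithin_of_forall fun _ hz =>
    (attAct_eq_self hfix hz).symm

theorem attAct_bc (hz : z ≠ 0) (g : GLa α) (M : RA s t α) (a : A) :
    attAct s t α γ ψ z (bc s t α g M) a =
      ψ.val z (t a) * (g (t a)).val * ψ.val z⁻¹ (t a) * attAct s t α γ ψ z M a *
        (ψ.val z (s a) * ((g (s a))⁻¹).val * ψ.val z⁻¹ (s a)) := by
  rw [attAct, attAct, Matrix.mul_smul, Matrix.smul_mul, ψ.conj_mul_conj hz, ψ.conj_mul_conj hz]
  rfl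

theorem bc_mem_att {M : RA s t α} (hM : M ∈ Att s t α γ ψ T) {g : GLa α}
    (hg : g ∈ Upsi α ψ) : bc s t α g M ∈ Att s t α γ ψ T := by
  obtain ⟨μ, hμ, hlim⟩ := hg
  have hlim_inv (q : V) : Tendsto (fun z : ℂ => ψ.val z q * ((g q)⁻¹).val * ψ.val z⁻¹ q)
      (𝓝[≠] 0) (𝓝 (μ⁻¹ • 1)) := by
    have hdet : (μ • (1 : Matrix (Fin (α q)) (Fin (α q)) ℂ)).det ≠ 0 := by simp [hμ]
    have hinv : (μ • (1 : Matrix (Fin (α q)) (Fin (α q)) ℂ))⁻¹ = μ⁻¹ • 1 :=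
      Matrix.inv_eq_left_inv (by simp [hμ])
    rw [← hinv]
    exact ((hlim q).matrix_inv hdet).congr' (eventually_nhdsWithin_of_forall fun z hz =>
      (ψ.conj_units_inv hz q (g q)).symm)
  refine tendsto_pi_nhds.2 fun a => ?_
  have hprod := ((hlim (t a)).matrix_mul (tendsto_pi_nhds.1 hM a)).matrix_mul (hlim_inv (s a))
  rw [Matrix.smul_mul, Matrix.one_mul, Matrix.mul_smul, Matrix.mul_one, smul_smul,
    inv_mul_cancel₀ hμ, one_smul] at hprod
  exact hprod.congr' (eventually_nhdsWithin_of_forall fun z hz => (attAct_bc hz g M a).symm)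

theorem conj_mul_eq_attAct_bc_mul (hfix : FixedLift s t α γ ψ T) (hz : z ≠ 0) (g : GLa α)
    (a : A) :
    ψ.val z (t a) * (g (t a)).val * ψ.val z⁻¹ (t a) * T a =
      attAct s t α γ ψ z (bc s t α g T) a *
        (ψ.val z (s a) * (g (s a)).val * ψ.val z⁻¹ (s a)) := by
  rw [attAct_bc hz, Matrix.mul_assoc _ _ (ψ.val z (s a) * _ * _), ψ.conj_mul_conj hz,
    Units.inv_mul, Matrix.mul_one, ψ.val_mul_val_inv hz, Matrix.mul_one, attAct_eq_self hfix hz]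

theorem Schurian.exists_eq_smul_one_of_tendsto (hT : Schurian s t α T)
    (hfix : FixedLift s t α γ ψ T) {g : GLa α} (hg : bc s t α g T ∈ Att s t α γ ψ T) {m : ℤ}
    {P : ∀ q, Matrix (Fin (α q)) (Fin (α q)) ℂ}
    (hP : ∀ q, Tendsto (fun z : ℂ => z ^ (-m) • (ψ.val z q * (g q).val * ψ.val z⁻¹ q))
      (𝓝[≠] 0) (𝓝 (P q))) :
    ∃ c : ℂ, ∀ q, P q = c • 1 := by
  refine hT P fun a => tendsto_nhds_unique ((hP (t a)).matrix_mul tendsto_const_nhds) ?_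
  refine ((tendsto_pi_nhds.1 hg a).matrix_mul (hP (s a))).congr'
    (eventually_nhdsWithin_of_forall fun z hz => ?_)
  dsimp only
  rw [Matrix.mul_smul, Matrix.smul_mul, conj_mul_eq_attAct_bc_mul hfix hz]

theorem mem_upsi_of_bc_mem_att [Fintype V] (hT : Schurian s t α T)
    (hfix : FixedLift s t α γ ψ T) {g : GLa α} (hg : bc s t α g T ∈ Att s t α γ ψ T) :
    g ∈ Upsi α ψ := by
  classical
  let B (q : V) : Matrix (Fin (α q)) (Fin (α q)) ℂ :=
    ((ψ.h q)⁻¹).val * (g q).val * (ψ.h q).val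
  let S := Finset.univ.filter fun x : Σ q, Fin (α q) × Fin (α q) => B x.1 x.2.1 x.2.2 ≠ 0
  obtain hS | hS := S.eq_empty_or_nonempty
  · refine ⟨1, one_ne_zero, fun q => ?_⟩
    have hB : B q = 0 := by
      ext i j
      by_contra h
      exact Finset.eq_empty_iff_forall_notMem.1 hS ⟨q, i, j⟩
        (Finset.mem_filter.2 ⟨Finset.mem_univ _, h⟩)
    have hunit : IsUnit (B q) := ((ψ.h q)⁻¹ * g q * ψ.h q).isUnit
    have := subsingleton_of_zero_eq_one (isUnit_zero_iff.1 (hB ▸ hunit))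
    exact tendsto_const_nhds.congr fun _ => Subsingleton.elim _ _
  obtain ⟨⟨q₀, i₀, j₀⟩, hx₀, hmin⟩ :=
    S.exists_min_image (fun x => ψ.e x.1 x.2.1 - ψ.e x.1 x.2.2) hS
  set m := ψ.e q₀ i₀ - ψ.e q₀ j₀
  have hlim (q : V) := ψ.tendsto_zpow_smul_conj q (g q).val (m := m) fun i j hij =>
    hmin ⟨q, i, j⟩ (Finset.mem_filter.2 ⟨Finset.mem_univ _, hij⟩)
  obtain ⟨c, hc⟩ := hT.exists_eq_smul_one_of_tendsto hfix hg hlim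
  obtain ⟨hm, hc0⟩ := eq_zero_and_ne_zero_of_weightPart_eq_smul_one
    (eq_smul_one_of_units_conj_eq_smul_one (hc q₀)) rfl (Finset.mem_filter.1 hx₀).2
  refine ⟨c, hc0, fun q => ?_⟩
  have hlim_q := hlim q
  rw [hc q, hm, neg_zero] at hlim_q
  simpa only [zpow_zero, one_smul] using hlim_q

theorem attAct_apply_of_stdForm (hstd : StdForm α ψ) (hz : z ≠ 0) (M : RA s t α) (a : A)
    (i : Fin (α (t a))) (j : Fin (α (s a))) :
    attAct s t α γ ψ z M a i j = z ^ (ψ.e (t a) i - ψ.e (s a) j - γ a) * M a i j := by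
  rw [attAct, Matrix.smul_apply, hstd, hstd,
    diagonal_zpow_mul_mul_diagonal_inv_zpow_apply _ _ _ hz, smul_eq_mul, ← mul_assoc,
    ← zpow_add₀ hz, neg_add_eq_sub]

theorem apply_eq_of_mem_att_of_stdForm (hfix : FixedLift s t α γ ψ T) (hstd : StdForm α ψ)
    {M : RA s t α} (hM : M ∈ Att s t α γ ψ T) {a : A} {i : Fin (α (t a))}
    {j : Fin (α (s a))} (hTij : T a i j ≠ 0) : M a i j = T a i j := by
  have hconst (z : ℂ) (hz : z ≠ 0) : attAct s t α γ ψ z M a i j = M a i j := by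
    have hTz := congrFun (congrFun (congrFun (attAct_eq_self hfix hz) a) i) j
    rw [attAct_apply_of_stdForm hstd hz] at hTz ⊢
    rw [(mul_eq_right₀ hTij).1 hTz, one_mul]
  have hlim := tendsto_pi_nhds.1 (tendsto_pi_nhds.1 (tendsto_pi_nhds.1 hM a) i) j
  refine tendsto_nhds_unique ?_ hlim
  exact tendsto_const_nhds.congr' (eventually_nhdsWithin_of_forall fun z hz => (hconst z hz).symm)

end Quiver

end QuivC

open QuivC Filter
open scoped Topology

variable {V A : Type} [Fintype V] [Fintype A]

/-- Lemma `uaction`.  Let `T ∈ R_α(Q)` be Schurian with a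
one-parameter subgroup `ψ` satisfying `ψ(z)∗T = z.T`.  Then (1) `U_ψ` preserves
`Att(T)`; (2) `g∗T ∈ Att(T)` iff `g ∈ U_ψ`; and (3) if `ψ` is in standard form then
for every `M ∈ Att(T)` the entries of `M` agree with those of `T` wherever the
latter are nonzero. -/
theorem statement15 (s t : A → V) (α : V → ℕ) (γ : A → ℤ)
    (T : RA s t α) (hT : Schurian s t α T)
    (ψ : OneParam α) (hfix : FixedLift s t α γ ψ T) :
    (∀ M ∈ Att s t α γ ψ T, ∀ g ∈ Upsi α ψ, bc s t α g M ∈ Att s t α γ ψ T) ∧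
    (∀ g : GLa α, bc s t α g T ∈ Att s t α γ ψ T ↔ g ∈ Upsi α ψ) ∧
    (StdForm α ψ →
      ∀ M ∈ Att s t α γ ψ T, ∀ (a : A) (i : Fin (α (t a))) (j : Fin (α (s a))),
        T a i j ≠ 0 → M a i j = T a i j) :=
  ⟨fun _ hM _ hg => bc_mem_att hM hg,
    fun _ => ⟨mem_upsi_of_bc_mem_att hT hfix, bc_mem_att (mem_att_self hfix)⟩,
    fun hstd _ hM _ _ _ hTij => apply_eq_of_mem_att_of_stdForm hfix hstd hM hTij⟩
end

section
/- Let k be an algebraically closed field, Q a quiver, and δ an isotropic Schur root of Q (⟨δ,δ⟩ = 0 and there exists a representation of dimension vector δ with endomorphism ring k·id) such that sl(δ) = 1, i.e. every indecomposable representation of dimension vector δ has endomorphism ring k·id. Define Θ_δ := ⟨−,δ⟩ − ⟨δ,−⟩. Then: (1) every indecomposable representation M of dimension vector δ is Θ_δ-semistable; and (2) an indecomposable representation M of dimension vector δ is not Θ_δ-stable if and only if there exists a non-split short exact sequence 0 → U → M → V → 0 in which U and V are exceptional representations (End = k·id and self-extension-free, dim Ext(U,U) = dim Ext(V,V) = 0)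 with Hom(U,V) = Hom(V,U) = 0 and dim Ext(U,V) = dim Ext(V,U) = 1. -/
namespace QuivRep

variable (k : Type) [Field k] {V A : Type} (s t : A → V)

/-- `RSp k s t X Y` is R(N,M) = ⊕_{a∈Q_1} Hom_k(N_{s(a)}, M_{t(a)}) where the
representation `N` has vertex spaces `X` and `M` has vertex spaces `Y`. -/
abbrev RSp (X Y : V → Type) [∀ q, AddCommGroup (X q)] [∀ q, Module k (X q)]
    [∀ q, AddCommGroup (Y q)] [∀ q, Module k (Y q)] : Type :=
  ∀ a : A, X (s a) →ₗ[k] Y (t a)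

variable {X Y : V → Type}
  [∀ q, AddCommGroup (X q)] [∀ q, Module k (X q)]
  [∀ q, AddCommGroup (Y q)] [∀ q, Module k (Y q)]

/-- The linear map `d_{N,M}` whose cokernel is Ext(N,M). Here `Nm` are the arrow
maps of `N` (on spaces `X`) and `Mm` those of `M` (on spaces `Y`). -/
def dMap (Nm : RSp k s t X X) (Mm : RSp k s t Y Y) :
    (∀ q, X q →ₗ[k] Y q) →ₗ[k] RSp k s t X Y where
  toFun f := fun a => (f (t a)).comp (Nm a) - (Mm a).comp (f (s a))
  map_add' f g := by
    funext a; ext x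
    simp only [Pi.add_apply, LinearMap.add_comp, LinearMap.comp_add, LinearMap.sub_apply,
      LinearMap.add_apply, LinearMap.comp_apply]
    abel
  map_smul' c f := by
    funext a; ext x
    simp [smul_sub]

/-- `f : M → N` is a morphism of representations (`M` on spaces `X`, `N` on spaces `Y`). -/
def IsRHom (Mm : RSp k s t X X) (Nm : RSp k s t Y Y) (f : ∀ q, X q →ₗ[k] Y q) : Prop :=
  ∀ a, (f (t a)).comp (Mm a) = (Nm a).comp (f (s a))

/-- Isomorphism of representations. -/
def RIso (Mm : RSp k s t X X) (Nm : RSp k s t Y Y) : Prop :=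
  ∃ f : ∀ q, X q →ₗ[k] Y q, IsRHom k s t Mm Nm f ∧ ∀ q, Function.Bijective (f q)

/-- A family of submodules is a subrepresentation. -/
def IsSubRep (Mm : RSp k s t X X) (U : ∀ q, Submodule k (X q)) : Prop :=
  ∀ a, ∀ x ∈ U (s a), Mm a x ∈ U (t a)

/-- Indecomposability: nonzero, and no nontrivial internal direct sum decomposition. -/
def Indec (Mm : RSp k s t X X) : Prop :=
  (∃ q, ∃ x : X q, x ≠ 0) ∧
  ∀ U W : ∀ q, Submodule k (X q), IsSubRep k s t Mm U → IsSubRep k s t Mm W →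
    (∀ q, U q ⊓ W q = ⊥) → (∀ q, U q ⊔ W q = ⊤) →
    (∀ q, U q = ⊥) ∨ (∀ q, W q = ⊥)

/-- The middle term `B(f,λ,μ)` of the extension determined by `f ∈ R(N,M)`:
vertex spaces `Y q × X q`, arrow maps `[[Mm, f],[0, Nm]]`. -/
def BExt (Mm : RSp k s t Y Y) (Nm : RSp k s t X X) (f : RSp k s t X Y) :
    RSp k s t (fun q => Y q × X q) (fun q => Y q × X q) :=
  fun a => LinearMap.prod
    ((Mm a).comp (LinearMap.fst k (Y (s a)) (X (s a))) +
      (f a).comp (LinearMap.snd k (Y (s a)) (X (s a))))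
    ((Nm a).comp (LinearMap.snd k (Y (s a)) (X (s a))))

/-- `U` is strong: every deformation `M(λ)`, `λ ∈ U`, is indecomposable. -/
def Strong (Mm : RSp k s t X X) (U : Set (RSp k s t X X)) : Prop :=
  ∀ lam ∈ U, Indec k s t (Mm + lam)

/-- `U` is separating: `M(λ) ≅ M(μ)` implies `λ = μ` for `λ, μ ∈ U`. -/
def Separating (Mm : RSp k s t X X) (U : Set (RSp k s t X X)) : Prop :=
  ∀ lam ∈ U, ∀ mu ∈ U, RIso k s t (Mm + lam) (Mm + mu) → lam = mu

/-- `End(M) = k·id`. -/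
def EndTrivial (Mm : RSp k s t X X) : Prop :=
  ∀ f : ∀ q, X q →ₗ[k] X q, IsRHom k s t Mm Mm f → ∃ c : k, ∀ q, f q = c • LinearMap.id

/-- `Hom(M,N) = 0`. -/
def HomZero (Mm : RSp k s t X X) (Nm : RSp k s t Y Y) : Prop :=
  ∀ f : ∀ q, X q →ₗ[k] Y q, IsRHom k s t Mm Nm f → f = 0

end QuivRep


open QuivRep

section Slopes

variable {k : Type} [Field k] {V A : Type} [Fintype V] [Fintype A] (s t : A → V)

/-- The Euler form `⟨β,β'⟩ = Σ_q β_q β'_q − Σ_a β_{s(a)} β'_{t(a)}`. -/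
def euler (β β' : V → ℕ) : ℤ :=
  ∑ q, (β q : ℤ) * (β' q : ℤ) - ∑ a, (β (s a) : ℤ) * (β' (t a) : ℤ)

/-- The slope `μ(β) = (Σ_q Θ_q β_q)/(Σ_q β_q)` of a dimension vector. -/
noncomputable def slopeDV (Θ : V → ℤ) (β : V → ℕ) : ℚ :=
  (∑ q, (Θ q : ℚ) * (β q : ℚ)) / (∑ q, (β q : ℚ))

/-- The standard vertex spaces of dimension vector `β`. -/
abbrev stdSp (k : Type) (β : V → ℕ) : V → Type := fun q => Fin (β q) → k

/-- `β` is a root: there is an indecomposable representation of dimension vector `β`. -/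
def IsRoot (β : V → ℕ) : Prop :=
  ∃ m : RSp k s t (stdSp k β) (stdSp k β), Indec k s t m

variable {X : V → Type}
  [∀ q, AddCommGroup (X q)] [∀ q, Module k (X q)] [∀ q, FiniteDimensional k (X q)]

/-- The slope of a family of submodules. -/
noncomputable def slopeSub (Θ : V → ℤ) (U : ∀ q, Submodule k (X q)) : ℚ :=
  (∑ q, (Θ q : ℚ) * (Module.finrank k (U q) : ℚ)) /
    (∑ q, (Module.finrank k (U q) : ℚ))

/-- The subrepresentation structure on a stable family of submodules. -/
def subRep (Mm : RSp k s t X X) (U : ∀ q, Submodule k (X q))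
    (hU : IsSubRep k s t Mm U) :
    RSp k s t (fun q => ↥(U q)) (fun q => ↥(U q)) :=
  fun a => (Mm a).restrict (hU a)

/-- The quotient representation `M/U`. -/
def quotRep (Mm : RSp k s t X X) (U : ∀ q, Submodule k (X q))
    (hU : IsSubRep k s t Mm U) :
    RSp k s t (fun q => X q ⧸ U q) (fun q => X q ⧸ U q) :=
  fun a => Submodule.mapQ (U (s a)) (U (t a)) (Mm a) (fun x hx => hU a x hx)

/-- `M` is `Θ`-semistable (slope stability). -/
def Semistable (Θ : V → ℤ) (Mm : RSp k s t X X) : Prop :=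
  ∀ W : ∀ q, Submodule k (X q), IsSubRep k s t Mm W → (∃ q, W q ≠ ⊥) →
    slopeSub Θ W ≤ slopeDV Θ (fun q => Module.finrank k (X q))

/-- `M` is `Θ`-stable (slope stability). -/
def StableSl (Θ : V → ℤ) (Mm : RSp k s t X X) : Prop :=
  ∀ W : ∀ q, Submodule k (X q), IsSubRep k s t Mm W → (∃ q, W q ≠ ⊥) →
    (¬ ∀ q, W q = ⊤) →
    slopeSub Θ W < slopeDV Θ (fun q => Module.finrank k (X q))

end Slopes

/-- The linear form `Θ_δ = ⟨−,δ⟩ − ⟨δ,−⟩`, evaluated on a dimension vector. -/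
def thetaD {V A : Type} [Fintype V] [Fintype A] (s t : A → V) (δ β : V → ℕ) : ℤ :=
  euler s t β δ - euler s t δ β

/-!
Let `U ⊆ M` be a subrepresentation with dimension vectors `u` of `U` and `v` of `V = M/U`. By
`sl(δ) = 1` the representation `M` is Schurian, so `Hom(M, U) = Hom(V, M) = 0` when `U` is
nonzero and proper, and `⟨δ,δ⟩ = 0` turns the identity `⟨β,β'⟩ = dim Hom − dim Ext` into
`Θ_δ(u) = dim Ext(V, M) + dim Ext(M, U) ≥ 0`.

If `M` is not stable, pick a nonzero `U` of minimal total dimension with `Θ_δ(u) ≤ 0`. Then both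
Ext groups vanish, and the exact sequences `Hom(N, M) → Hom(N, V) → Ext(N, U)` and
`Hom(M, N) → Hom(U, N) → Ext(V, N)` give `End(V) = k`, `Ext(U, U) = 0` and `Hom(U, V) = 0`;
`Hom(V, U) = 0` because `Hom(V, M) = 0`. Minimality gives `End(U) = k`: for an eigenvalue `c` of
an endomorphism `φ`, the image of `φ - c` is a subrepresentation of smaller dimension with
`Θ_δ ≤ 0`, hence zero. The remaining dimensions `dim Ext(V, V) = 0`,
`dim Ext(U, V) = dim Ext(V, U) = 1` are read off from the Euler form. Conversely, for such an
extension `Θ_δ(u) = ⟨u,v⟩ - ⟨v,u⟩ = 0`.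
-/

lemma Submodule.mkQ_comp_subtype {R M : Type*} [Ring R] [AddCommGroup M] [Module R M]
    (p : Submodule R M) : p.mkQ ∘ₗ p.subtype = 0 :=
  LinearMap.ext fun x => (Submodule.Quotient.mk_eq_zero _).2 x.2

lemma LinearMap.isCompl_ker_range_of_comp_eq_id {R M N : Type*} [Ring R] [AddCommGroup M]
    [Module R M] [AddCommGroup N] [Module R N] {f : M →ₗ[R] N} {σ : N →ₗ[R] M}
    (h : f ∘ₗ σ = LinearMap.id) : IsCompl (LinearMap.ker f) (LinearMap.range σ) := by
  have hidem : IsIdempotentElem (σ ∘ₗ f) := by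
    change (σ ∘ₗ f) ∘ₗ (σ ∘ₗ f) = σ ∘ₗ f
    ext x
    exact congr_arg σ (LinearMap.congr_fun h (f x))
  have hrange : LinearMap.range (σ ∘ₗ f) = LinearMap.range σ :=
    LinearMap.range_comp_of_range_eq_top σ
      (LinearMap.range_eq_top.2 fun y => ⟨σ y, LinearMap.congr_fun h y⟩)
  have hker : LinearMap.ker (σ ∘ₗ f) = LinearMap.ker f :=
    LinearMap.ker_comp_of_ker_eq_bot f
      (LinearMap.ker_eq_bot.2 (Function.LeftInverse.injective (LinearMap.congr_fun h)))
  simpa [hrange, hker] using (LinearMap.IsIdempotentElem.isCompl hidem).symm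

namespace QuivRep

open Module

variable {k : Type} [Field k] {V A : Type} {s t : A → V}

section Morphisms

variable {W X Y Z : V → Type}
  [∀ q, AddCommGroup (W q)] [∀ q, Module k (W q)]
  [∀ q, AddCommGroup (X q)] [∀ q, Module k (X q)]
  [∀ q, AddCommGroup (Y q)] [∀ q, Module k (Y q)]
  [∀ q, AddCommGroup (Z q)] [∀ q, Module k (Z q)]

variable (s t) in
lemma dMap_apply (Nm : RSp k s t X X) (Mm : RSp k s t Y Y) (f : ∀ q, X q →ₗ[k] Y q) (a : A) :
    dMap k s t Nm Mm f a = f (t a) ∘ₗ Nm a - Mm a ∘ₗ f (s a) := rfl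

lemma dMap_eq_zero_iff {Nm : RSp k s t X X} {Mm : RSp k s t Y Y} {f : ∀ q, X q →ₗ[k] Y q} :
    dMap k s t Nm Mm f = 0 ↔ IsRHom k s t Nm Mm f := by
  simp only [funext_iff, dMap_apply, Pi.zero_apply, sub_eq_zero]
  rfl

lemma IsRHom.comp {Lm : RSp k s t X X} {Mm : RSp k s t Y Y} {Nm : RSp k s t Z Z}
    {g : ∀ q, Y q →ₗ[k] Z q} {f : ∀ q, X q →ₗ[k] Y q}
    (hg : IsRHom k s t Mm Nm g) (hf : IsRHom k s t Lm Mm f) :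
    IsRHom k s t Lm Nm (fun q => g q ∘ₗ f q) := fun a => by
  rw [LinearMap.comp_assoc, hf a, ← LinearMap.comp_assoc, hg a, LinearMap.comp_assoc]

lemma dMap_comp_left {Nm : RSp k s t X X} {Mm : RSp k s t Y Y} {Pm : RSp k s t Z Z}
    {h : ∀ q, Y q →ₗ[k] Z q} (hh : IsRHom k s t Mm Pm h) (f : ∀ q, X q →ₗ[k] Y q)
    (a : A) :
    dMap k s t Nm Pm (fun q => h q ∘ₗ f q) a = h (t a) ∘ₗ dMap k s t Nm Mm f a := by
  rw [dMap_apply, dMap_apply, LinearMap.comp_sub, ← LinearMap.comp_assoc (f (s a)), ← hh a]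
  rfl

lemma dMap_comp_right {Lm : RSp k s t W W} {Nm : RSp k s t X X} {Mm : RSp k s t Y Y}
    {h : ∀ q, W q →ₗ[k] X q} (hh : IsRHom k s t Lm Nm h) (f : ∀ q, X q →ₗ[k] Y q)
    (a : A) :
    dMap k s t Lm Mm (fun q => f q ∘ₗ h q) a = dMap k s t Nm Mm f a ∘ₗ h (s a) := by
  rw [dMap_apply, dMap_apply, LinearMap.sub_comp, LinearMap.comp_assoc, hh a]
  rfl

lemma homZero_iff_ker_dMap_eq_bot {Nm : RSp k s t X X} {Mm : RSp k s t Y Y} :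
    HomZero k s t Nm Mm ↔ LinearMap.ker (dMap k s t Nm Mm) = ⊥ := by
  simp only [Submodule.eq_bot_iff, LinearMap.mem_ker, dMap_eq_zero_iff]
  rfl

lemma ker_dMap_self_eq_span {Nm : RSp k s t X X} (hEnd : EndTrivial k s t Nm) :
    LinearMap.ker (dMap k s t Nm Nm) = k ∙ (fun q => (LinearMap.id : X q →ₗ[k] X q)) := by
  refine le_antisymm (fun f hf => ?_) ?_
  · obtain ⟨c, hc⟩ := hEnd f (dMap_eq_zero_iff.1 hf)
    exact Submodule.mem_span_singleton.2 ⟨c, funext fun q => (hc q).symm⟩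
  · rw [Submodule.span_singleton_le_iff_mem, LinearMap.mem_ker, dMap_eq_zero_iff]
    intro a
    rfl

lemma isSubRep_ker {Nm : RSp k s t X X} {Mm : RSp k s t Y Y} {f : ∀ q, X q →ₗ[k] Y q}
    (hf : IsRHom k s t Nm Mm f) : IsSubRep k s t Nm (fun q => LinearMap.ker (f q)) := by
  intro a x hx
  rw [LinearMap.mem_ker] at hx ⊢
  rw [← LinearMap.comp_apply, hf a, LinearMap.comp_apply, hx, map_zero]

lemma isSubRep_range {Nm : RSp k s t X X} {Mm : RSp k s t Y Y} {f : ∀ q, X q →ₗ[k] Y q}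
    (hf : IsRHom k s t Nm Mm f) : IsSubRep k s t Mm (fun q => LinearMap.range (f q)) := by
  rintro a _ ⟨x, rfl⟩
  exact ⟨Nm a x, LinearMap.congr_fun (hf a) x⟩

end Morphisms

section Subrepresentations

variable {X Z : V → Type}
  [∀ q, AddCommGroup (X q)] [∀ q, Module k (X q)]
  [∀ q, AddCommGroup (Z q)] [∀ q, Module k (Z q)]
  {Mm : RSp k s t X X} {U : ∀ q, Submodule k (X q)} (hU : IsSubRep k s t Mm U)

variable (s t Mm) in
def Splits : Prop :=
  ∃ σ : ∀ q, (X q ⧸ U q) →ₗ[k] X q,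
    IsRHom k s t (quotRep s t Mm U hU) Mm σ ∧ ∀ q, (U q).mkQ.comp (σ q) = LinearMap.id

lemma isRHom_subtype : IsRHom k s t (subRep s t Mm U hU) Mm (fun q => (U q).subtype) :=
  fun _ => rfl

lemma isRHom_mkQ : IsRHom k s t Mm (quotRep s t Mm U hU) (fun q => (U q).mkQ) :=
  fun _ => (Submodule.mapQ_mkQ ..).symm

lemma IsSubRep.map_subtype {W : ∀ q, Submodule k (U q)}
    (hW : IsSubRep k s t (subRep s t Mm U hU) W) :
    IsSubRep k s t Mm (fun q => (W q).map (U q).subtype) := by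
  rintro a _ ⟨x, hx, rfl⟩
  exact ⟨_, hW a x hx, rfl⟩

/-- `Hom(N, M) → Hom(N, M/U) → Ext(N, U)` is exact. -/
lemma exists_lift_of_range_dMap_eq_top {Nm : RSp k s t Z Z}
    (hExt : LinearMap.range (dMap k s t Nm (subRep s t Mm U hU)) = ⊤)
    {f : ∀ q, Z q →ₗ[k] X q ⧸ U q} (hf : IsRHom k s t Nm (quotRep s t Mm U hU) f) :
    ∃ F : ∀ q, Z q →ₗ[k] X q,
      IsRHom k s t Nm Mm F ∧ ∀ q, (U q).mkQ ∘ₗ F q = f q := by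
  choose σ hσ using fun q => (U q).mkQ.exists_rightInverse_of_surjective (U q).range_mkQ
  set g : ∀ q, Z q →ₗ[k] X q := fun q => σ q ∘ₗ f q
  have hg : ∀ q, (U q).mkQ ∘ₗ g q = f q := fun q => by
    rw [← LinearMap.comp_assoc, hσ q, LinearMap.id_comp]
  -- the obstruction to `g` being a morphism takes values in `U`
  have hdefect : ∀ a x, dMap k s t Nm Mm g a x ∈ U (t a) := fun a x => by
    rw [← Submodule.Quotient.mk_eq_zero, ← Submodule.mkQ_apply, ← LinearMap.comp_apply,
      ← dMap_comp_left (isRHom_mkQ hU)]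
    simp only [hg, dMap_eq_zero_iff.2 hf, Pi.zero_apply, LinearMap.zero_apply]
  obtain ⟨p, hp⟩ := LinearMap.range_eq_top.1 hExt
    (fun a => (dMap k s t Nm Mm g a).codRestrict (U (t a)) (hdefect a))
  refine ⟨g - fun q => (U q).subtype ∘ₗ p q, ?_, fun q => ?_⟩
  · rw [← dMap_eq_zero_iff, map_sub, sub_eq_zero]
    funext a
    rw [dMap_comp_left (isRHom_subtype hU), hp, LinearMap.subtype_comp_codRestrict]
  · rw [Pi.sub_apply, LinearMap.comp_sub, hg, ← LinearMap.comp_assoc, Submodule.mkQ_comp_subtype,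
      LinearMap.zero_comp, sub_zero]

/-- `Hom(M, N) → Hom(U, N) → Ext(M/U, N)` is exact. -/
lemma exists_extend_of_range_dMap_eq_top {Nm : RSp k s t Z Z}
    (hExt : LinearMap.range (dMap k s t (quotRep s t Mm U hU) Nm) = ⊤)
    {g : ∀ q, U q →ₗ[k] Z q} (hg : IsRHom k s t (subRep s t Mm U hU) Nm g) :
    ∃ G : ∀ q, X q →ₗ[k] Z q,
      IsRHom k s t Mm Nm G ∧ ∀ q, G q ∘ₗ (U q).subtype = g q := by
  choose r hr using fun q => (U q).subtype.exists_leftInverse_of_injective (U q).ker_subtype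
  set f : ∀ q, X q →ₗ[k] Z q := fun q => g q ∘ₗ r q
  have hf : ∀ q, f q ∘ₗ (U q).subtype = g q := fun q => by
    rw [LinearMap.comp_assoc, hr q, LinearMap.comp_id]
  -- the obstruction to `f` being a morphism vanishes on `U`
  have hdefect : ∀ a, U (s a) ≤ LinearMap.ker (dMap k s t Mm Nm f a) := fun a x hx => by
    rw [LinearMap.mem_ker, show x = (U (s a)).subtype ⟨x, hx⟩ from rfl,
      ← LinearMap.comp_apply, ← dMap_comp_right (isRHom_subtype hU)]
    simp only [hf, dMap_eq_zero_iff.2 hg, Pi.zero_apply, LinearMap.zero_apply]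
  obtain ⟨P, hP⟩ := LinearMap.range_eq_top.1 hExt
    (fun a => (U (s a)).liftQ (dMap k s t Mm Nm f a) (hdefect a))
  refine ⟨f - fun q => P q ∘ₗ (U q).mkQ, ?_, fun q => ?_⟩
  · rw [← dMap_eq_zero_iff, map_sub, sub_eq_zero]
    funext a
    rw [dMap_comp_right (isRHom_mkQ hU), hP, Submodule.liftQ_mkQ]
  · rw [Pi.sub_apply, LinearMap.sub_comp, hf, LinearMap.comp_assoc, Submodule.mkQ_comp_subtype,
      LinearMap.comp_zero, sub_zero]

lemma range_dMap_subRep_eq_top {Y : V → Type}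
    [∀ q, AddCommGroup (Y q)] [∀ q, Module k (Y q)] {Nm : RSp k s t Y Y}
    (hExt : LinearMap.range (dMap k s t Mm Nm) = ⊤) :
    LinearMap.range (dMap k s t (subRep s t Mm U hU) Nm) = ⊤ := by
  choose r hr using fun q => (U q).subtype.exists_leftInverse_of_injective (U q).ker_subtype
  refine LinearMap.range_eq_top.2 fun η => ?_
  obtain ⟨g, hg⟩ := LinearMap.range_eq_top.1 hExt (fun a => η a ∘ₗ r (s a))
  refine ⟨fun q => g q ∘ₗ (U q).subtype, funext fun a => ?_⟩
  rw [dMap_comp_right (isRHom_subtype hU), hg, LinearMap.comp_assoc, hr, LinearMap.comp_id]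

lemma not_splits_of_indec (hind : Indec k s t Mm) (hnz : ∃ q, U q ≠ ⊥)
    (hproper : ¬ ∀ q, U q = ⊤) : ¬ Splits s t Mm hU := by
  rintro ⟨σ, hσ, hσmk⟩
  have hcompl := fun q => LinearMap.isCompl_ker_range_of_comp_eq_id (hσmk q)
  simp only [Submodule.ker_mkQ] at hcompl
  rcases hind.2 U _ hU (isSubRep_range hσ) (fun q => (hcompl q).inf_eq_bot)
    (fun q => (hcompl q).sup_eq_top) with hbot | hbot
  · obtain ⟨q, hq⟩ := hnz
    exact hq (hbot q)
  · exact hproper fun q => by simpa [hbot q] using (hcompl q).sup_eq_top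

lemma splits_of_forall_eq_bot (hbot : ∀ q, U q = ⊥) : Splits s t Mm hU := by
  refine ⟨fun q => ((U q).quotEquivOfEqBot (hbot q)).toLinearMap, fun a => ?_, fun q => ?_⟩ <;>
    refine Submodule.linearMap_qext _ (LinearMap.ext fun x => ?_) <;> rfl

lemma splits_of_forall_eq_top (htop : ∀ q, U q = ⊤) : Splits s t Mm hU := by
  refine ⟨fun q => 0, fun a => ?_, fun q => ?_⟩
  · ext x
    simp
  · have : Subsingleton (X q ⧸ U q) := Submodule.Quotient.subsingleton_iff.2 (htop q)
    exact Subsingleton.elim _ _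

end Subrepresentations

section Schurian

variable {X : V → Type} [∀ q, AddCommGroup (X q)] [∀ q, Module k (X q)]
  {Mm : RSp k s t X X} {U : ∀ q, Submodule k (X q)} (hU : IsSubRep k s t Mm U)
  (hEnd : EndTrivial k s t Mm)
include hEnd

lemma homZero_subRep (hproper : ¬ ∀ q, U q = ⊤) : HomZero k s t Mm (subRep s t Mm U hU) := by
  intro f hf
  obtain ⟨c, hc⟩ := hEnd _ ((isRHom_subtype hU).comp hf)
  by_cases hc0 : c = 0
  · funext q
    refine LinearMap.ext fun x => Subtype.ext ?_
    simpa [hc0] using LinearMap.congr_fun (hc q) x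
  · refine absurd (fun q => (U q).eq_top_iff'.2 fun x => ?_) hproper
    have hx : c • x ∈ U q := by
      have h := LinearMap.congr_fun (hc q) x
      simp only [LinearMap.comp_apply, Submodule.subtype_apply, LinearMap.smul_apply,
        LinearMap.id_apply] at h
      exact h ▸ (f q x).2
    simpa [hc0] using (U q).smul_mem c⁻¹ hx

lemma homZero_quotRep (hnz : ∃ q, U q ≠ ⊥) : HomZero k s t (quotRep s t Mm U hU) Mm := by
  intro f hf
  obtain ⟨c, hc⟩ := hEnd _ (hf.comp (isRHom_mkQ hU))
  obtain ⟨q₁, hq₁⟩ := hnz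
  obtain ⟨x, hx, hx0⟩ := (Submodule.ne_bot_iff _).1 hq₁
  have hc0 : c = 0 := by
    have h := LinearMap.congr_fun (hc q₁) x
    simp only [LinearMap.comp_apply, Submodule.mkQ_apply,
      (Submodule.Quotient.mk_eq_zero _).2 hx, map_zero, LinearMap.smul_apply,
      LinearMap.id_apply] at h
    exact (smul_eq_zero.1 h.symm).resolve_right hx0
  funext q
  exact Submodule.linearMap_qext _ (by simpa [hc0] using hc q)

lemma homZero_quotRep_subRep (hnz : ∃ q, U q ≠ ⊥) :
    HomZero k s t (quotRep s t Mm U hU) (subRep s t Mm U hU) := by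
  intro f hf
  have h := congr_fun (homZero_quotRep hU hEnd hnz _ ((isRHom_subtype hU).comp hf))
  funext q
  exact LinearMap.ext fun x => Subtype.ext (LinearMap.congr_fun (h q) x)

lemma endTrivial_quotRep (hMU : LinearMap.range (dMap k s t Mm (subRep s t Mm U hU)) = ⊤) :
    EndTrivial k s t (quotRep s t Mm U hU) := by
  intro ψ hψ
  obtain ⟨F, hF, hFψ⟩ := exists_lift_of_range_dMap_eq_top hU hMU (hψ.comp (isRHom_mkQ hU))
  obtain ⟨c, hc⟩ := hEnd F hF
  refine ⟨c, fun q => Submodule.linearMap_qext _ ?_⟩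
  rw [← hFψ q, hc q]
  rfl

lemma homZero_subRep_quotRep
    (hMU : LinearMap.range (dMap k s t Mm (subRep s t Mm U hU)) = ⊤)
    (hVM : LinearMap.range (dMap k s t (quotRep s t Mm U hU) Mm) = ⊤) :
    HomZero k s t (subRep s t Mm U hU) (quotRep s t Mm U hU) := by
  intro f hf
  obtain ⟨g, hg, hgf⟩ :=
    exists_lift_of_range_dMap_eq_top hU (range_dMap_subRep_eq_top hU hMU) hf
  obtain ⟨G, hG, hGg⟩ := exists_extend_of_range_dMap_eq_top hU hVM hg
  obtain ⟨c, hc⟩ := hEnd G hG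
  funext q
  rw [← hgf q, ← hGg q, hc q, LinearMap.smul_comp, LinearMap.id_comp, LinearMap.comp_smul,
    Submodule.mkQ_comp_subtype, smul_zero]
  rfl

end Schurian

section Euler

variable [Fintype V] [Fintype A] (s t)

lemma euler_add_left (u v β : V → ℕ) :
    euler s t (u + v) β = euler s t u β + euler s t v β := by
  simp only [euler, Pi.add_apply, Nat.cast_add, add_mul, Finset.sum_add_distrib]
  ring

lemma euler_add_right (β u v : V → ℕ) :
    euler s t β (u + v) = euler s t β u + euler s t β v := by
  simp only [euler, Pi.add_apply, Nat.cast_add, mul_add, Finset.sum_add_distrib]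
  ring

lemma thetaD_add (δ u v : V → ℕ) :
    thetaD s t δ (u + v) = thetaD s t δ u + thetaD s t δ v := by
  simp only [thetaD, euler_add_left, euler_add_right]
  ring

lemma thetaD_add_eq_euler_sub_euler (u v : V → ℕ) :
    thetaD s t (u + v) u = euler s t u v - euler s t v u := by
  simp only [thetaD, euler_add_left, euler_add_right]
  ring

lemma euler_of_isotropic_split {u v : V → ℕ} (hiso : euler s t (u + v) (u + v) = 0)
    (hleft : euler s t (u + v) u = 0) (hright : euler s t v (u + v) = 0)
    (hu : euler s t u u = 1) :
    euler s t v v = 1 ∧ euler s t u v = -1 ∧ euler s t v u = -1 := by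
  simp only [euler_add_left, euler_add_right] at hiso hleft hright
  omega

end Euler

section Dimensions

variable {X Y : V → Type}
  [∀ q, AddCommGroup (X q)] [∀ q, Module k (X q)]
  [∀ q, AddCommGroup (Y q)] [∀ q, Module k (Y q)]

variable (s t) in
/-- `dim Hom(N, M)`. -/
noncomputable def homDim (Nm : RSp k s t X X) (Mm : RSp k s t Y Y) : ℕ :=
  finrank k (LinearMap.ker (dMap k s t Nm Mm))

variable (s t) in
/-- `dim Ext(N, M)`. -/
noncomputable def extDim (Nm : RSp k s t X X) (Mm : RSp k s t Y Y) : ℕ :=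
  finrank k (RSp k s t X Y ⧸ LinearMap.range (dMap k s t Nm Mm))

lemma homDim_eq_zero {Nm : RSp k s t X X} {Mm : RSp k s t Y Y} (h : HomZero k s t Nm Mm) :
    homDim s t Nm Mm = 0 := by
  rw [homDim, homZero_iff_ker_dMap_eq_bot.1 h, finrank_bot]

lemma homDim_self_eq_one {Nm : RSp k s t X X} (hEnd : EndTrivial k s t Nm)
    (hnz : ∃ q, Nontrivial (X q)) : homDim s t Nm Nm = 1 := by
  rw [homDim, ker_dMap_self_eq_span hEnd]
  refine finrank_span_singleton fun h => ?_
  obtain ⟨q, hq⟩ := hnz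
  obtain ⟨x, hx⟩ := exists_ne (0 : X q)
  exact hx (LinearMap.congr_fun (congr_fun h q) x)

variable [Fintype A] [∀ q, FiniteDimensional k (X q)] [∀ q, FiniteDimensional k (Y q)]

lemma extDim_eq_zero_iff {Nm : RSp k s t X X} {Mm : RSp k s t Y Y} :
    extDim s t Nm Mm = 0 ↔ LinearMap.range (dMap k s t Nm Mm) = ⊤ := by
  rw [extDim, Module.finrank_zero_iff, Submodule.Quotient.subsingleton_iff]

variable [Fintype V]

variable (s t) in
lemma euler_eq_homDim_sub_extDim (Nm : RSp k s t X X) (Mm : RSp k s t Y Y) :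
    euler s t (fun q => finrank k (X q)) (fun q => finrank k (Y q))
      = (homDim s t Nm Mm : ℤ) - extDim s t Nm Mm := by
  have hdom : (∑ q, (finrank k (X q) : ℤ) * finrank k (Y q))
      = finrank k (∀ q, X q →ₗ[k] Y q) := by
    simp only [finrank_pi_fintype, finrank_linearMap]
    push_cast
    rfl
  have hcod : (∑ a, (finrank k (X (s a)) : ℤ) * finrank k (Y (t a)))
      = finrank k (RSp k s t X Y) := by
    simp only [finrank_pi_fintype, finrank_linearMap]
    push_cast
    rfl
  have hrank := LinearMap.finrank_range_add_finrank_ker (dMap k s t Nm Mm)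
  have hquot := Submodule.finrank_quotient_add_finrank (LinearMap.range (dMap k s t Nm Mm))
  rw [euler, hdom, hcod, homDim, extDim]
  omega

end Dimensions

section Transport

variable {X Y : V → Type}
  [∀ q, AddCommGroup (X q)] [∀ q, Module k (X q)]
  [∀ q, AddCommGroup (Y q)] [∀ q, Module k (Y q)]
  (e : ∀ q, X q ≃ₗ[k] Y q) {Mm : RSp k s t X X}

variable (s t) in
def conjRep (e : ∀ q, X q ≃ₗ[k] Y q) (Mm : RSp k s t X X) : RSp k s t Y Y :=
  fun a => (e (t a)).toLinearMap ∘ₗ Mm a ∘ₗ (e (s a)).symm.toLinearMap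

lemma IsSubRep.comap_conjRep {P : ∀ q, Submodule k (Y q)}
    (hP : IsSubRep k s t (conjRep s t e Mm) P) :
    IsSubRep k s t Mm (fun q => (Submodule.orderIsoMapComap (e q)).symm (P q)) := by
  intro a x hx
  simpa [conjRep] using hP a (e (s a) x) hx

lemma Indec.conjRep (hind : Indec k s t Mm) : Indec k s t (conjRep s t e Mm) := by
  obtain ⟨⟨q, x, hx⟩, hdec⟩ := hind
  refine ⟨⟨q, e q x, (e q).map_ne_zero_iff.2 hx⟩, fun P W hP hW hinf hsup => ?_⟩
  have hbot : ∀ P : ∀ q, Submodule k (Y q),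
      (∀ q, (Submodule.orderIsoMapComap (e q)).symm (P q) = ⊥) → ∀ q, P q = ⊥ :=
    fun P h q => (map_eq_bot_iff _).1 (h q)
  refine (hdec _ _ (hP.comap_conjRep e) (hW.comap_conjRep e) (fun q => ?_) (fun q => ?_)).imp
    (hbot P) (hbot W)
  · rw [← map_inf, hinf q, map_bot]
  · rw [← map_sup, hsup q, map_top]

lemma EndTrivial.of_conjRep (h : EndTrivial k s t (conjRep s t e Mm)) : EndTrivial k s t Mm := by
  intro f hf
  have hconj : IsRHom k s t (conjRep s t e Mm) (conjRep s t e Mm)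
      (fun q => (e q).toLinearMap ∘ₗ f q ∘ₗ (e q).symm.toLinearMap) := fun a => by
    ext y
    simpa [conjRep] using congr_arg (e (t a)) (LinearMap.congr_fun (hf a) ((e (s a)).symm y))
  obtain ⟨c, hc⟩ := h _ hconj
  refine ⟨c, fun q => LinearMap.ext fun x => (e q).injective ?_⟩
  simpa using LinearMap.congr_fun (hc q) (e q x)

end Transport

variable {X : V → Type} [∀ q, AddCommGroup (X q)] [∀ q, Module k (X q)]
  [∀ q, FiniteDimensional k (X q)] {Mm : RSp k s t X X}

lemma endTrivial_of_indec {δ : V → ℕ} (hdim : ∀ q, finrank k (X q) = δ q)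
    (hsl : ∀ m : RSp k s t (stdSp k δ) (stdSp k δ), Indec k s t m → EndTrivial k s t m)
    (hind : Indec k s t Mm) : EndTrivial k s t Mm :=
  let e := fun q => LinearEquiv.ofFinrankEq (X q) (stdSp k δ q) (by simp [hdim])
  (hsl _ (hind.conjRep e)).of_conjRep e

section Minimal

variable [Fintype V]

lemma exists_minimal_subRep {θ : (V → ℕ) → ℤ}
    (h : ∃ W : ∀ q, Submodule k (X q), IsSubRep k s t Mm W ∧ (∃ q, W q ≠ ⊥) ∧
      (∃ q, W q ≠ ⊤) ∧ θ (fun q => finrank k (W q)) ≤ 0) :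
    ∃ U : ∀ q, Submodule k (X q), IsSubRep k s t Mm U ∧ (∃ q, U q ≠ ⊥) ∧
      (¬ ∀ q, U q = ⊤) ∧ θ (fun q => finrank k (U q)) ≤ 0 ∧
      ∀ W : ∀ q, Submodule k (X q), IsSubRep k s t Mm W → (∃ q, W q ≠ ⊥) →
        θ (fun q => finrank k (W q)) ≤ 0 →
        ∑ q, finrank k (U q) ≤ ∑ q, finrank k (W q) := by
  obtain ⟨W₀, hW₀, hW₀nz, ⟨q₀, hq₀⟩, hW₀θ⟩ := h
  obtain ⟨U, ⟨hU, hnz, hθ⟩, hmin⟩ :=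
    (measure fun W : ∀ q, Submodule k (X q) => ∑ q, finrank k (W q)).wf.has_min
      {W | IsSubRep k s t Mm W ∧ (∃ q, W q ≠ ⊥) ∧ θ (fun q => finrank k (W q)) ≤ 0}
      ⟨W₀, hW₀, hW₀nz, hW₀θ⟩
  have hmin' : ∀ W : ∀ q, Submodule k (X q), IsSubRep k s t Mm W → (∃ q, W q ≠ ⊥) →
      θ (fun q => finrank k (W q)) ≤ 0 → ∑ q, finrank k (U q) ≤ ∑ q, finrank k (W q) :=
    fun W hW hWnz hWθ => not_lt.1 (hmin W ⟨hW, hWnz, hWθ⟩)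
  refine ⟨U, hU, hnz, fun htop => ?_, hθ, hmin'⟩
  have hUX : ∑ q, finrank k (U q) = ∑ q, finrank k (X q) :=
    Finset.sum_congr rfl fun q _ => by rw [htop q, finrank_top]
  have hW₀X : ∑ q, finrank k (W₀ q) < ∑ q, finrank k (X q) :=
    Finset.sum_lt_sum (fun q _ => (W₀ q).finrank_le)
      ⟨q₀, Finset.mem_univ _, Submodule.finrank_lt hq₀⟩
  exact (hmin' W₀ hW₀ hW₀nz hW₀θ).not_gt (hUX ▸ hW₀X)

variable [Fintype A] {δ : V → ℕ} {U : ∀ q, Submodule k (X q)} (hU : IsSubRep k s t Mm U)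
  (hsemi : ∀ W : ∀ q, Submodule k (X q), IsSubRep k s t Mm W →
    0 ≤ thetaD s t δ (fun q => finrank k (W q)))
  (hmin : ∀ W : ∀ q, Submodule k (X q), IsSubRep k s t Mm W → (∃ q, W q ≠ ⊥) →
    thetaD s t δ (fun q => finrank k (W q)) ≤ 0 →
    ∑ q, finrank k (U q) ≤ ∑ q, finrank k (W q))
  (hθ : thetaD s t δ (fun q => finrank k (U q)) ≤ 0)
include hsemi hmin hθ

/-- The image of `ψ` is a subrepresentation with `Θ ≤ 0`, hence by minimality `0` or all of `U`;
the latter is impossible when `ψ` is not injective. -/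
lemma eq_zero_of_not_injective_of_minimal {ψ : ∀ q, U q →ₗ[k] U q}
    (hψ : IsRHom k s t (subRep s t Mm U hU) (subRep s t Mm U hU) ψ) {q₁ : V}
    (hq₁ : ¬ Function.Injective (ψ q₁)) : ψ = 0 := by
  set K := fun q => (LinearMap.ker (ψ q)).map (U q).subtype
  set I := fun q => (LinearMap.range (ψ q)).map (U q).subtype
  have hfinrank_I : ∀ q, finrank k (I q) = finrank k (LinearMap.range (ψ q)) := fun q =>
    Submodule.finrank_map_subtype_eq _ _
  have hsplit : ((fun q => finrank k (K q)) + fun q => finrank k (I q))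
      = fun q => finrank k (U q) := funext fun q => by
    rw [Pi.add_apply, Submodule.finrank_map_subtype_eq, hfinrank_I, add_comm,
      LinearMap.finrank_range_add_finrank_ker]
  have hIθ : thetaD s t δ (fun q => finrank k (I q)) ≤ 0 := by
    have := thetaD_add s t δ (fun q => finrank k (K q)) (fun q => finrank k (I q))
    rw [hsplit] at this
    linarith [hsemi K (IsSubRep.map_subtype hU (isSubRep_ker hψ))]
  by_contra hne
  obtain ⟨q₂, hq₂⟩ : ∃ q, ψ q ≠ 0 := by simpa [funext_iff] using hne
  have hInz : ∃ q, I q ≠ ⊥ := ⟨q₂, by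
    rw [← Submodule.map_bot (U q₂).subtype]
    exact (Submodule.map_injective_of_injective (U q₂).injective_subtype).ne
      (LinearMap.range_eq_bot.not.2 hq₂)⟩
  have hle : ∀ q, finrank k (I q) ≤ finrank k (U q) := fun q =>
    (hfinrank_I q).trans_le (LinearMap.finrank_range_le _)
  have heq := (Finset.sum_eq_sum_iff_of_le fun q _ => hle q).1
    ((Finset.sum_le_sum fun q _ => hle q).antisymm
      (hmin I (IsSubRep.map_subtype hU (isSubRep_range hψ)) hInz hIθ)) q₁ (Finset.mem_univ _)
  rw [hfinrank_I] at heq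
  exact hq₁ (LinearMap.injective_iff_surjective.2 (LinearMap.range_eq_top.1
    (Submodule.eq_top_of_finrank_eq heq)))

lemma endTrivial_subRep_of_minimal [IsAlgClosed k] (hnz : ∃ q, U q ≠ ⊥) :
    EndTrivial k s t (subRep s t Mm U hU) := by
  intro φ hφ
  obtain ⟨q₁, hq₁⟩ := hnz
  have : Nontrivial (U q₁) := Submodule.nontrivial_iff_ne_bot.2 hq₁
  obtain ⟨c, hc⟩ := Module.End.exists_eigenvalue (φ q₁)
  obtain ⟨x, hx⟩ := hc.exists_hasEigenvector
  set ψ : ∀ q, U q →ₗ[k] U q := fun q => φ q - c • LinearMap.id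
  have hψ : IsRHom k s t (subRep s t Mm U hU) (subRep s t Mm U hU) ψ := fun a => by
    simp only [ψ, LinearMap.sub_comp, LinearMap.comp_sub, hφ a, LinearMap.smul_comp,
      LinearMap.comp_smul, LinearMap.id_comp, LinearMap.comp_id]
  have hnotinj : ¬ Function.Injective (ψ q₁) := fun hinj =>
    hx.2 (hinj (by simp [ψ, hx.apply_eq_smul]))
  have hψ0 := eq_zero_of_not_injective_of_minimal hU hsemi hmin hθ hψ hnotinj
  exact ⟨c, fun q => sub_eq_zero.1 (congr_fun hψ0 q)⟩

end Minimal

variable (s t Mm) in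
def IsExceptionalExtension {U : ∀ q, Submodule k (X q)} (hU : IsSubRep k s t Mm U) : Prop :=
  ¬ Splits s t Mm hU ∧
  EndTrivial k s t (subRep s t Mm U hU) ∧
  LinearMap.range (dMap k s t (subRep s t Mm U hU) (subRep s t Mm U hU)) = ⊤ ∧
  EndTrivial k s t (quotRep s t Mm U hU) ∧
  LinearMap.range (dMap k s t (quotRep s t Mm U hU) (quotRep s t Mm U hU)) = ⊤ ∧
  HomZero k s t (subRep s t Mm U hU) (quotRep s t Mm U hU) ∧
  HomZero k s t (quotRep s t Mm U hU) (subRep s t Mm U hU) ∧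
  extDim s t (subRep s t Mm U hU) (quotRep s t Mm U hU) = 1 ∧
  extDim s t (quotRep s t Mm U hU) (subRep s t Mm U hU) = 1

section Isotropic

variable {δ : V → ℕ} (hdim : ∀ q, finrank k (X q) = δ q) {U : ∀ q, Submodule k (X q)}
  (hU : IsSubRep k s t Mm U)
include hdim

lemma dimVec_eq_add (U : ∀ q, Submodule k (X q)) :
    δ = (fun q => finrank k (U q)) + fun q => finrank k (X q ⧸ U q) :=
  funext fun q => by rw [Pi.add_apply, ← hdim, ← (U q).finrank_quotient_add_finrank, add_comm]

variable [Fintype V] [Fintype A]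

lemma thetaD_eq_extDim_add_extDim (hiso : euler s t δ δ = 0) (hEnd : EndTrivial k s t Mm)
    (hnz : ∃ q, U q ≠ ⊥) (hproper : ¬ ∀ q, U q = ⊤) :
    thetaD s t δ (fun q => finrank k (U q))
      = extDim s t (quotRep s t Mm U hU) Mm + extDim s t Mm (subRep s t Mm U hU) := by
  have hVM := euler_eq_homDim_sub_extDim s t (quotRep s t Mm U hU) Mm
  have hMU := euler_eq_homDim_sub_extDim s t Mm (subRep s t Mm U hU)
  rw [homDim_eq_zero (homZero_quotRep hU hEnd hnz), funext hdim] at hVM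
  rw [homDim_eq_zero (homZero_subRep hU hEnd hproper), funext hdim] at hMU
  have hsplit := euler_add_left s t (fun q => finrank k (U q))
    (fun q => finrank k (X q ⧸ U q)) δ
  rw [← dimVec_eq_add hdim, hiso] at hsplit
  rw [thetaD]
  omega

include hU in
lemma thetaD_nonneg (hiso : euler s t δ δ = 0) (hEnd : EndTrivial k s t Mm) :
    0 ≤ thetaD s t δ (fun q => finrank k (U q)) := by
  by_cases hnz : ∃ q, U q ≠ ⊥
  · by_cases hproper : ∀ q, U q = ⊤
    · have hδ : (fun q => finrank k (U q)) = δ := funext fun q => by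
        rw [hproper q, finrank_top, hdim]
      rw [hδ, thetaD, sub_self]
    · rw [thetaD_eq_extDim_add_extDim hdim hU hiso hEnd hnz hproper]
      positivity
  · have h0 : (fun q => finrank k (U q)) = 0 := funext fun q => by
      rw [not_not.1 (not_exists.1 hnz q), finrank_bot, Pi.zero_apply]
    rw [h0]
    simp [thetaD, euler]

lemma isExceptionalExtension_of_range_dMap_eq_top (hiso : euler s t δ δ = 0)
    (hind : Indec k s t Mm) (hEnd : EndTrivial k s t Mm) (hnz : ∃ q, U q ≠ ⊥)
    (hproper : ¬ ∀ q, U q = ⊤)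
    (hMU : LinearMap.range (dMap k s t Mm (subRep s t Mm U hU)) = ⊤)
    (hVM : LinearMap.range (dMap k s t (quotRep s t Mm U hU) Mm) = ⊤)
    (hEndU : EndTrivial k s t (subRep s t Mm U hU)) :
    IsExceptionalExtension s t Mm hU := by
  have hEndV := endTrivial_quotRep hU hEnd hMU
  have hUU := range_dMap_subRep_eq_top hU hMU
  have hUV := homZero_subRep_quotRep hU hEnd hMU hVM
  have hVU := homZero_quotRep_subRep hU hEnd hnz
  have hnzU : ∃ q, Nontrivial (U q) := hnz.imp fun q hq => Submodule.nontrivial_iff_ne_bot.2 hq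
  have hnzV : ∃ q, Nontrivial (X q ⧸ U q) :=
    (not_forall.1 hproper).imp fun q hq => Submodule.Quotient.nontrivial_iff.2 hq
  have hMU' : euler s t δ (fun q => finrank k (U q)) = 0 := by
    rw [← funext hdim, euler_eq_homDim_sub_extDim,
      homDim_eq_zero (homZero_subRep hU hEnd hproper), extDim_eq_zero_iff.2 hMU]
    rfl
  have hVM' : euler s t (fun q => finrank k (X q ⧸ U q)) δ = 0 := by
    rw [← funext hdim, euler_eq_homDim_sub_extDim,
      homDim_eq_zero (homZero_quotRep hU hEnd hnz), extDim_eq_zero_iff.2 hVM]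
    rfl
  have hUU' : euler s t (fun q => finrank k (U q)) (fun q => finrank k (U q)) = 1 := by
    rw [euler_eq_homDim_sub_extDim s t (subRep s t Mm U hU) (subRep s t Mm U hU),
      homDim_self_eq_one hEndU hnzU, extDim_eq_zero_iff.2 hUU]
    rfl
  have hX := dimVec_eq_add hdim U
  obtain ⟨hVV', hUV', hVU'⟩ :=
    euler_of_isotropic_split s t (hX ▸ hiso) (hX ▸ hMU') (hX ▸ hVM') hUU'
  rw [euler_eq_homDim_sub_extDim s t (quotRep s t Mm U hU) (quotRep s t Mm U hU),
    homDim_self_eq_one hEndV hnzV] at hVV'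
  rw [euler_eq_homDim_sub_extDim s t (subRep s t Mm U hU) (quotRep s t Mm U hU),
    homDim_eq_zero hUV] at hUV'
  rw [euler_eq_homDim_sub_extDim s t (quotRep s t Mm U hU) (subRep s t Mm U hU),
    homDim_eq_zero hVU] at hVU'
  exact ⟨not_splits_of_indec hU hind hnz hproper, hEndU, hUU, hEndV,
    extDim_eq_zero_iff.1 (by omega), hUV, hVU, by omega, by omega⟩

lemma isExceptionalExtension_of_minimal [IsAlgClosed k] (hiso : euler s t δ δ = 0)
    (hind : Indec k s t Mm) (hEnd : EndTrivial k s t Mm)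
    (hsemi : ∀ W : ∀ q, Submodule k (X q), IsSubRep k s t Mm W →
      0 ≤ thetaD s t δ (fun q => finrank k (W q)))
    (hmin : ∀ W : ∀ q, Submodule k (X q), IsSubRep k s t Mm W → (∃ q, W q ≠ ⊥) →
      thetaD s t δ (fun q => finrank k (W q)) ≤ 0 →
      ∑ q, finrank k (U q) ≤ ∑ q, finrank k (W q))
    (hnz : ∃ q, U q ≠ ⊥) (hproper : ¬ ∀ q, U q = ⊤)
    (hθ : thetaD s t δ (fun q => finrank k (U q)) ≤ 0) :
    IsExceptionalExtension s t Mm hU := by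
  have hExt := thetaD_eq_extDim_add_extDim hdim hU hiso hEnd hnz hproper
  rw [le_antisymm hθ (hsemi U hU)] at hExt
  exact isExceptionalExtension_of_range_dMap_eq_top hdim hU hiso hind hEnd hnz hproper
    (extDim_eq_zero_iff.1 (by omega)) (extDim_eq_zero_iff.1 (by omega))
    (endTrivial_subRep_of_minimal hU hsemi hmin hθ hnz)

lemma thetaD_eq_zero_of_isExceptionalExtension (h : IsExceptionalExtension s t Mm hU) :
    thetaD s t δ (fun q => finrank k (U q)) = 0 := by
  obtain ⟨-, -, -, -, -, hUV, hVU, hExtUV, hExtVU⟩ := h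
  rw [dimVec_eq_add hdim U, thetaD_add_eq_euler_sub_euler,
    euler_eq_homDim_sub_extDim s t (subRep s t Mm U hU) (quotRep s t Mm U hU),
    euler_eq_homDim_sub_extDim s t (quotRep s t Mm U hU) (subRep s t Mm U hU),
    homDim_eq_zero hUV, homDim_eq_zero hVU, hExtUV, hExtVU, sub_self]

end Isotropic

end QuivRep

theorem statement19_general {k : Type} [Field k] [IsAlgClosed k]
    {V A : Type} [Fintype V] [Fintype A] (s t : A → V)
    (δ : V → ℕ)
    -- δ is isotropic
    (hiso : euler s t δ δ = 0)
    -- sl(δ) = 1 : every indecomposable of dimension vector δ is Schurian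
    (hsl : ∀ m : RSp k s t (stdSp k δ) (stdSp k δ), Indec k s t m →
      EndTrivial k s t m)
    -- an indecomposable representation M of dimension vector δ
    {X : V → Type}
    [∀ q, AddCommGroup (X q)] [∀ q, Module k (X q)] [∀ q, FiniteDimensional k (X q)]
    (Mm : RSp k s t X X) (hdim : ∀ q, Module.finrank k (X q) = δ q)
    (hind : Indec k s t Mm) :
    -- (1) M is Θ_δ-semistable
    (∀ U : ∀ q, Submodule k (X q), IsSubRep k s t Mm U →
      0 ≤ thetaD s t δ (fun q => Module.finrank k (U q))) ∧
    -- (2) M is not Θ_δ-stable iff it is a non-split extension of exceptionals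
    (¬ (∀ U : ∀ q, Submodule k (X q), IsSubRep k s t Mm U → (∃ q, U q ≠ ⊥) →
        (¬ ∀ q, U q = ⊤) → 0 < thetaD s t δ (fun q => Module.finrank k (U q))) ↔
      ∃ (U : ∀ q, Submodule k (X q)) (hU : IsSubRep k s t Mm U),
        -- the sequence 0 → U → M → M/U → 0 is non-split
        (¬ ∃ σ : ∀ q, (X q ⧸ U q) →ₗ[k] X q,
          IsRHom k s t (quotRep s t Mm U hU) Mm σ ∧
          ∀ q, (U q).mkQ.comp (σ q) = LinearMap.id) ∧
        -- U is exceptional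
        EndTrivial k s t (subRep s t Mm U hU) ∧
        LinearMap.range (dMap k s t (subRep s t Mm U hU) (subRep s t Mm U hU)) = ⊤ ∧
        -- V = M/U is exceptional
        EndTrivial k s t (quotRep s t Mm U hU) ∧
        LinearMap.range (dMap k s t (quotRep s t Mm U hU) (quotRep s t Mm U hU)) = ⊤ ∧
        -- Hom(U,V) = Hom(V,U) = 0
        HomZero k s t (subRep s t Mm U hU) (quotRep s t Mm U hU) ∧
        HomZero k s t (quotRep s t Mm U hU) (subRep s t Mm U hU) ∧
        -- dim Ext(U,V) = dim Ext(V,U) = 1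
        Module.finrank k
          ((RSp k s t (fun q => ↥(U q)) (fun q => X q ⧸ U q)) ⧸
            LinearMap.range (dMap k s t (subRep s t Mm U hU) (quotRep s t Mm U hU))) = 1 ∧
        Module.finrank k
          ((RSp k s t (fun q => X q ⧸ U q) (fun q => ↥(U q))) ⧸
            LinearMap.range (dMap k s t (quotRep s t Mm U hU) (subRep s t Mm U hU))) = 1) := by
  have hEnd := endTrivial_of_indec hdim hsl hind
  have hsemi := fun U (hU : IsSubRep k s t Mm U) => thetaD_nonneg hdim hU hiso hEnd
  refine ⟨hsemi, fun hns => ?_, fun ⟨U, hU, hext⟩ hstable => ?_⟩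
  · push Not at hns
    obtain ⟨U, hU, hnz, hproper, hθ, hmin⟩ := exists_minimal_subRep hns
    exact ⟨U, hU, isExceptionalExtension_of_minimal hdim hU hiso hind hEnd hsemi hmin hnz
      hproper hθ⟩
  · have hpos := hstable U hU
      (by_contra fun h => hext.1 (splits_of_forall_eq_bot hU (by simpa using h)))
      (fun h => hext.1 (splits_of_forall_eq_top hU h))
    exact hpos.ne' (thetaD_eq_zero_of_isExceptionalExtension hdim hU hext)

/-- Lemma `isotropic`.  Let `δ` be an isotropic Schur root with
`sl(δ) = 1`.  Then every indecomposable representation `M` of dimension vector `δ` is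
`Θ_δ`-semistable, and `M` fails to be `Θ_δ`-stable if and only if there is a non-split
short exact sequence `0 → U → M → V → 0` with `U`, `V` exceptional,
`Hom(U,V) = Hom(V,U) = 0` and `dim Ext(U,V) = dim Ext(V,U) = 1`. -/
theorem statement19 {k : Type} [Field k] [IsAlgClosed k]
    {V A : Type} [Fintype V] [Fintype A] (s t : A → V)
    (δ : V → ℕ)
    -- δ is isotropic
    (hiso : euler s t δ δ = 0)
    -- δ is a Schur root
    (hschurroot : ∃ m : RSp k s t (stdSp k δ) (stdSp k δ), EndTrivial k s t m)
    -- sl(δ) = 1 : every indecomposable of dimension vector δ is Schurian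
    (hsl : ∀ m : RSp k s t (stdSp k δ) (stdSp k δ), Indec k s t m →
      EndTrivial k s t m)
    -- an indecomposable representation M of dimension vector δ
    {X : V → Type}
    [∀ q, AddCommGroup (X q)] [∀ q, Module k (X q)] [∀ q, FiniteDimensional k (X q)]
    (Mm : RSp k s t X X) (hdim : ∀ q, Module.finrank k (X q) = δ q)
    (hind : Indec k s t Mm) :
    -- (1) M is Θ_δ-semistable
    (∀ U : ∀ q, Submodule k (X q), IsSubRep k s t Mm U →
      0 ≤ thetaD s t δ (fun q => Module.finrank k (U q))) ∧
    -- (2) M is not Θ_δ-stable iff it is a non-split extension of exceptionals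
    (¬ (∀ U : ∀ q, Submodule k (X q), IsSubRep k s t Mm U → (∃ q, U q ≠ ⊥) →
        (¬ ∀ q, U q = ⊤) → 0 < thetaD s t δ (fun q => Module.finrank k (U q))) ↔
      ∃ (U : ∀ q, Submodule k (X q)) (hU : IsSubRep k s t Mm U),
        -- the sequence 0 → U → M → M/U → 0 is non-split
        (¬ ∃ σ : ∀ q, (X q ⧸ U q) →ₗ[k] X q,
          IsRHom k s t (quotRep s t Mm U hU) Mm σ ∧
          ∀ q, (U q).mkQ.comp (σ q) = LinearMap.id) ∧
        -- U is exceptional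
        EndTrivial k s t (subRep s t Mm U hU) ∧
        LinearMap.range (dMap k s t (subRep s t Mm U hU) (subRep s t Mm U hU)) = ⊤ ∧
        -- V = M/U is exceptional
        EndTrivial k s t (quotRep s t Mm U hU) ∧
        LinearMap.range (dMap k s t (quotRep s t Mm U hU) (quotRep s t Mm U hU)) = ⊤ ∧
        -- Hom(U,V) = Hom(V,U) = 0
        HomZero k s t (subRep s t Mm U hU) (quotRep s t Mm U hU) ∧
        HomZero k s t (quotRep s t Mm U hU) (subRep s t Mm U hU) ∧
        -- dim Ext(U,V) = dim Ext(V,U) = 1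
        Module.finrank k
          ((RSp k s t (fun q => ↥(U q)) (fun q => X q ⧸ U q)) ⧸
            LinearMap.range (dMap k s t (subRep s t Mm U hU) (quotRep s t Mm U hU))) = 1 ∧
        Module.finrank k
          ((RSp k s t (fun q => X q ⧸ U q) (fun q => ↥(U q))) ⧸
            LinearMap.range (dMap k s t (quotRep s t Mm U hU) (subRep s t Mm U hU))) = 1) :=
  statement19_general s t δ hiso hsl Mm hdim hind
end
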